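/- In every k-swap game with only strategic agents, k ≥ 2 nonempty types, and a connected topology, every assignment v satisfies DI(v) ≥ k; consequently, the integration price of anarchy is at most n/k. Moreover this bound is tight: for the k-swap game with x+1 agents of type T₁ and x agents of each other type (n = kx+1) on the tree with root α having k children β₁, …, β_k, each with x−1 leaf children, there is an assignment in which every agent is exposed (DI = n), while there is an equilibrium assignment with DI = k. -/

import Mathlib

/-!
Each type occupies a nonempty proper set of nodes of a connected graph, so some edge leaves
that set and the agent at its inner end is exposed: every assignment exposes at least `k`
agents, and none exposes more than `n`.

For tightness, give the root type `0` and each `β_i` together with its leaves type `i`.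
Rotating the types of the `β_i` cyclically exposes every agent. In the segregated assignment
only the root and the `β_i` with `i ≠ 0` are exposed, and it is an equilibrium: an improving
swap between agents of different types needs each of their nodes to have, apart from the other
node, a neighbour of the other agent's type, and in this tree that forces one of the two nodes
to be surrounded by its own type.
-/

open Finset

namespace SwapGame

/-- Build a simple graph from a (not necessarily symmetric) boolean relation
by symmetrizing it and removing loops. -/
def mkGraph {V : Type*} (r : V → V → Bool) : SimpleGraph V where
  Adj a b := a ≠ b ∧ (r a b ∨ r b a)
  symm := ⟨fun a b h => ⟨Ne.symm h.1, Or.symm h.2⟩⟩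
  loopless := ⟨fun a h => h.1 rfl⟩

instance mkGraph.instDecidableRel {V : Type*} [DecidableEq V] (r : V → V → Bool) :
    DecidableRel (mkGraph r).Adj :=
  fun a b => inferInstanceAs (Decidable (a ≠ b ∧ (r a b ∨ r b a)))

variable {A V K : Type*} [Fintype V] [DecidableEq A] [DecidableEq V] [DecidableEq K]

/-- The assignment obtained from `σ` by swapping the locations of agents `i` and `j`. -/
def swapA (σ : A ≃ V) (i j : A) : A ≃ V := (Equiv.swap i j).trans σ

/-- The utility of agent `i` under assignment `σ`: the fraction of the neighbors of the
node of `i` that are occupied by agents of the same type (friends of `i`). -/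
def util (G : SimpleGraph V) [DecidableRel G.Adj] (c : A → K) (σ : A ≃ V) (i : A) : ℚ :=
  (((G.neighborFinset (σ i)).filter (fun w => c (σ.symm w) = c i)).card : ℚ) /
    ((G.neighborFinset (σ i)).card : ℚ)

/-- Agents `i` and `j` both strictly increase their utility by swapping their locations. -/
def improving (G : SimpleGraph V) [DecidableRel G.Adj] (c : A → K) (σ : A ≃ V)
    (i j : A) : Prop :=
  util G c σ i < util G c (swapA σ i j) i ∧ util G c σ j < util G c (swapA σ i j) j

/-- An assignment is an equilibrium if no pair of agents can both strictly increase
their utility by swapping positions. -/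
def isEquilibrium (G : SimpleGraph V) [DecidableRel G.Adj] (c : A → K) (σ : A ≃ V) : Prop :=
  ¬ ∃ i j : A, improving G c σ i j

/-- The social welfare of an assignment: the sum of the utilities of all agents. -/
def SW [Fintype A] (G : SimpleGraph V) [DecidableRel G.Adj] (c : A → K) (σ : A ≃ V) : ℚ :=
  ∑ i : A, util G c σ i

/-- Agent `i` is exposed: at least one neighbor is occupied by an agent of another type. -/
def exposed (G : SimpleGraph V) [DecidableRel G.Adj] (c : A → K) (σ : A ≃ V) (i : A) : Prop :=
  ((G.neighborFinset (σ i)).filter (fun w => c (σ.symm w) ≠ c i)).Nonempty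

instance exposed.instDecidable (G : SimpleGraph V) [DecidableRel G.Adj] (c : A → K)
    (σ : A ≃ V) : DecidablePred (exposed G c σ) :=
  fun _ => inferInstanceAs (Decidable (Finset.Nonempty _))

/-- The degree of integration of an assignment: the number of exposed agents. -/
def DI [Fintype A] (G : SimpleGraph V) [DecidableRel G.Adj] (c : A → K) (σ : A ≃ V) : ℕ :=
  (univ.filter (fun i : A => exposed G c σ i)).card

end SwapGame

namespace SwapGame

/-- The topology: a root `α` with `k` children `β₁, …, β_k`, each of which has `x − 1`
leaf children of its own. -/
inductive VT (k x : ℕ) where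
  | root : VT k x
  | mid : Fin k → VT k x
  | leaf : Fin k → Fin (x - 1) → VT k x
  deriving DecidableEq, Fintype

def adjVT {k x : ℕ} : VT k x → VT k x → Bool
  | .root, .mid _ => true
  | .mid i, .leaf j _ => i == j
  | _, _ => false

abbrev GVT (k x : ℕ) : SimpleGraph (VT k x) := mkGraph (@adjVT k x)

/-- Agents: `x + 1` agents of type `0` and `x` agents of each other type
(`n = kx + 1`); the type of an agent is its first component. -/
abbrev AT (k x : ℕ) := Σ t : Fin k, Fin (if (t : ℕ) = 0 then x + 1 else x)

section Swap

variable {A V : Type*} [DecidableEq A] (σ : A ≃ V)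

lemma swapA_apply_left (i j : A) : swapA σ i j i = σ j := by simp [swapA]

lemma swapA_symm_apply (i j : A) (w : V) :
    (swapA σ i j).symm w = Equiv.swap i j (σ.symm w) := by
  simp [swapA]

lemma swapA_comm (i j : A) : swapA σ i j = swapA σ j i := by
  rw [swapA, swapA, Equiv.swap_comm]

end Swap

section Utility

variable {A V K : Type*} [Fintype V] [DecidableEq K]
  {G : SimpleGraph V} [DecidableRel G.Adj] {c : A → K} {σ : A ≃ V}

lemma util_nonneg (i : A) : 0 ≤ util G c σ i := by
  unfold util; positivity

lemma exists_friend_of_util_pos {i : A} (h : 0 < util G c σ i) :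
    ∃ w, G.Adj (σ i) w ∧ c (σ.symm w) = c i := by
  by_contra! hno
  have : (G.neighborFinset (σ i)).filter (fun w => c (σ.symm w) = c i) = ∅ :=
    Finset.filter_false_of_mem fun w hw => hno w ((G.mem_neighborFinset _ _).1 hw)
  simp [util, this] at h

variable [DecidableEq A]

lemma util_swapA_of_type_eq {i j : A} (h : c i = c j) :
    util G c (swapA σ i j) i = util G c σ j := by
  unfold util
  rw [swapA_apply_left]
  congr 3
  refine Finset.filter_congr fun w _ => ?_
  rw [swapA_symm_apply, h]
  rcases eq_or_ne (σ.symm w) i with hi | hi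
  · simp [hi, h]
  rcases eq_or_ne (σ.symm w) j with hj | hj
  · simp [hj, h]
  · rw [Equiv.swap_apply_of_ne_of_ne hi hj]

/-- Swapping two friends only exchanges their utilities. -/
lemma not_improving_of_type_eq {i j : A} (h : c i = c j) : ¬ improving G c σ i j := by
  rintro ⟨hi, hj⟩
  rw [util_swapA_of_type_eq h] at hi
  rw [swapA_comm, util_swapA_of_type_eq h.symm] at hj
  exact lt_asymm hi hj

/-- After the swap, the neighbours of `i` are those of the old node of `j`, with `j` now
sitting on the node of `i`. -/
lemma exists_friend_near_of_improving {i j : A} (hij : c i ≠ c j) (h : improving G c σ i j) :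
    ∃ w, G.Adj (σ j) w ∧ w ≠ σ i ∧ c (σ.symm w) = c i := by
  obtain ⟨w, hadj, hw⟩ := exists_friend_of_util_pos ((util_nonneg i).trans_lt h.1)
  rw [swapA_apply_left] at hadj
  rw [swapA_symm_apply] at hw
  have hwj : σ.symm w ≠ j := fun hwj => hadj.ne (by rw [← hwj, σ.apply_symm_apply])
  have hwi : σ.symm w ≠ i := fun hwi => by
    rw [hwi, Equiv.swap_apply_left] at hw
    exact hij hw.symm
  refine ⟨w, hadj, fun hw' => hwi (by rw [hw', σ.symm_apply_apply]), ?_⟩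
  rwa [Equiv.swap_apply_of_ne_of_ne hwi hwj] at hw

end Utility

section Coloring

variable {A V K : Type*} [Fintype V] [DecidableEq K]
  {G : SimpleGraph V} [DecidableRel G.Adj] {c : A → K} {σ : A ≃ V} {col : V → K}

lemma exposed_iff_of_coloring (hσ : ∀ v, c (σ.symm v) = col v) {a : A} :
    exposed G c σ a ↔ ∃ w, G.Adj (σ a) w ∧ col w ≠ col (σ a) := by
  have hcol : col (σ a) = c a := by rw [← hσ, σ.symm_apply_apply]
  simp [exposed, Finset.Nonempty, hσ, hcol]

lemma DI_eq_card_of_coloring [Fintype A] [DecidableEq V] (hσ : ∀ v, c (σ.symm v) = col v) :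
    DI G c σ = #{v | ∃ w, G.Adj v w ∧ col w ≠ col v} :=
  Finset.card_equiv σ fun _ => by simp [exposed_iff_of_coloring hσ]

variable [DecidableEq A]

lemma improving_comm {i j : A} (h : improving G c σ i j) : improving G c σ j i := by
  rw [improving, swapA_comm]
  exact h.symm

theorem isEquilibrium_of_coloring (hσ : ∀ v, c (σ.symm v) = col v)
    (h : ∀ u v, col u ≠ col v → (∃ w, G.Adj u w ∧ w ≠ v ∧ col w = col v) →
      ∀ w, G.Adj v w → col w = col v) :
    isEquilibrium G c σ := by
  rintro ⟨i, j, hij⟩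
  have hcol : ∀ a, col (σ a) = c a := fun a => by rw [← hσ, σ.symm_apply_apply]
  by_cases hc : c i = c j
  · exact not_improving_of_type_eq hc hij
  obtain ⟨w, hw, hwi, hwc⟩ := exists_friend_near_of_improving hc hij
  obtain ⟨w', hw', -, hw'c⟩ := exists_friend_near_of_improving (Ne.symm hc) (improving_comm hij)
  rw [hσ, ← hcol] at hwc hw'c
  have := h (σ j) (σ i) (by rwa [hcol, hcol, ne_comm]) ⟨w, hw, hwi, hwc⟩ w' hw'
  rw [hw'c, hcol, hcol] at this
  exact hc this.symm

end Coloring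

section Integration

variable {A V K : Type*} [Fintype V] [DecidableEq K]
  {G : SimpleGraph V} [DecidableRel G.Adj] {c : A → K} (σ : A ≃ V)

lemma exists_exposed_of_type [Nontrivial K] (hG : G.Connected) (hc : Function.Surjective c)
    (t : K) : ∃ i, c i = t ∧ exposed G c σ i := by
  obtain ⟨i, rfl⟩ := hc t
  obtain ⟨t', ht'⟩ := exists_ne (c i)
  obtain ⟨i', rfl⟩ := hc t'
  obtain ⟨p⟩ := hG.preconnected (σ i) (σ i')
  obtain ⟨d, -, hd, hd'⟩ := p.exists_boundary_dart {v | c (σ.symm v) = c i} (by simp)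
    (by simpa using ht')
  refine ⟨σ.symm d.fst, hd, d.snd, ?_⟩
  simp only [Set.mem_ofPred_eq] at hd hd'
  simpa [hd, d.adj] using hd'

variable [Fintype A]

theorem card_le_DI [Fintype K] [Nontrivial K] (hG : G.Connected) (hc : Function.Surjective c) :
    Fintype.card K ≤ DI G c σ :=
  Finset.card_le_card_of_surjOn c fun t _ => by
    obtain ⟨i, hi, he⟩ := exists_exposed_of_type σ hG hc t
    exact ⟨i, by simpa using he, hi⟩

lemma DI_le_card : DI G c σ ≤ Fintype.card A := Finset.card_filter_le _ _

theorem DI_le_card_div_mul_DI [Fintype K] [Nontrivial K] (hG : G.Connected)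
    (hc : Function.Surjective c) (σ' : A ≃ V) :
    (DI G c σ' : ℚ) ≤ Fintype.card A / Fintype.card K * DI G c σ := by
  have hK : (0 : ℚ) < Fintype.card K := by exact_mod_cast Fintype.card_pos
  calc (DI G c σ' : ℚ) ≤ Fintype.card A := by exact_mod_cast DI_le_card σ'
    _ = Fintype.card A / Fintype.card K * Fintype.card K := by field_simp
    _ ≤ Fintype.card A / Fintype.card K * DI G c σ := by
      gcongr
      exact_mod_cast card_le_DI σ hG hc

end Integration

lemma exists_sigma_equiv_of_card_fiber {ι V : Type*} [DecidableEq ι] [Fintype V] {n : ι → ℕ}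
    (f : V → ι) (h : ∀ t, Fintype.card {v // f v = t} = n t) :
    ∃ σ : (Σ t, Fin (n t)) ≃ V, ∀ v, (σ.symm v).1 = f v :=
  ⟨(Equiv.sigmaCongrRight fun t => (Fintype.equivFinOfCardEq (h t)).symm).trans
    (Equiv.sigmaFiberEquiv f), fun _ => rfl⟩

section Tree

variable {k x : ℕ}

lemma GVT_adj_root_iff {w : VT k x} : (GVT k x).Adj .root w ↔ ∃ i, w = .mid i := by
  cases w <;> simp [mkGraph, adjVT]

lemma GVT_adj_mid_iff {i : Fin k} {w : VT k x} :
    (GVT k x).Adj (.mid i) w ↔ w = .root ∨ ∃ l, w = .leaf i l := by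
  cases w <;> simp [mkGraph, adjVT, eq_comm (a := i)]

lemma GVT_adj_leaf_iff {i : Fin k} {l : Fin (x - 1)} {w : VT k x} :
    (GVT k x).Adj (.leaf i l) w ↔ w = .mid i := by
  cases w <;> simp [mkGraph, adjVT]

variable [NeZero k]

lemma card_AT : Fintype.card (AT k x) = k * x + 1 := by
  obtain ⟨k, rfl⟩ : ∃ m, k = m + 1 := Nat.exists_eq_add_one.2 (Nat.pos_of_ne_zero NeZero.out)
  simp only [Fintype.card_sigma, Fin.val_eq_zero_iff, Fintype.card_fin, Fin.sum_univ_succ,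
    ↓reduceIte, Fin.succ_ne_zero, sum_const, card_univ, smul_eq_mul]
  ring

def treeColoring (π : Equiv.Perm (Fin k)) : VT k x → Fin k
  | .root => 0
  | .mid i => π i
  | .leaf i _ => i

@[simp] lemma treeColoring_root (π : Equiv.Perm (Fin k)) :
    treeColoring π (.root : VT k x) = 0 := rfl

@[simp] lemma treeColoring_mid (π : Equiv.Perm (Fin k)) (i : Fin k) :
    treeColoring π (.mid i : VT k x) = π i := rfl

@[simp] lemma treeColoring_leaf (π : Equiv.Perm (Fin k)) (i : Fin k) (l : Fin (x - 1)) :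
    treeColoring π (.leaf i l) = i := rfl

def treeColoringFiberEquiv (π : Equiv.Perm (Fin k)) (t : Fin k) :
    {v : VT k x // treeColoring π v = t} ≃ Option (Fin (x - 1)) ⊕ {_u : Unit // (t : ℕ) = 0} where
  toFun
    | ⟨.root, h⟩ => .inr ⟨(), by simp [← h]⟩
    | ⟨.mid _, _⟩ => .inl none
    | ⟨.leaf _ l, _⟩ => .inl (some l)
  invFun
    | .inl none => ⟨.mid (π.symm t), by simp⟩
    | .inl (some l) => ⟨.leaf t l, rfl⟩
    | .inr ⟨_, h⟩ => ⟨.root, (Fin.val_eq_zero_iff.1 h).symm⟩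
  left_inv := by
    rintro ⟨v | i | ⟨i, l⟩, rfl⟩ <;> simp
  right_inv := by
    rintro ((_ | _) | _) <;> rfl

lemma card_treeColoring_fiber (hx : 0 < x) (π : Equiv.Perm (Fin k)) (t : Fin k) :
    Fintype.card {v : VT k x // treeColoring π v = t} = if (t : ℕ) = 0 then x + 1 else x := by
  rw [Fintype.card_congr (treeColoringFiberEquiv π t)]
  simp only [Fin.val_eq_zero_iff, Fintype.card_sum, Fintype.card_option, Fintype.card_fin,
    Fintype.card_subtype, univ_unique, PUnit.default_eq_unit, filter_const]
  split_ifs <;> simp only [card_singleton, card_empty] <;> omega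

lemma exists_equiv_treeColoring (hx : 0 < x) (π : Equiv.Perm (Fin k)) :
    ∃ σ : AT k x ≃ VT k x, ∀ v, (σ.symm v).1 = treeColoring π v :=
  exists_sigma_equiv_of_card_fiber _ (card_treeColoring_fiber hx π)

variable {σ : AT k x ≃ VT k x}

lemma DI_treeColoring_one [Nontrivial (Fin k)] (hσ : ∀ v, (σ.symm v).1 = treeColoring 1 v) :
    DI (GVT k x) Sigma.fst σ = k := by
  have hexposed : ({v | ∃ w, (GVT k x).Adj v w ∧ treeColoring 1 w ≠ treeColoring 1 v} :
      Finset (VT k x)) = univ.image fun t => if t = 0 then .root else .mid t := by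
    ext v
    cases v <;> simp [GVT_adj_root_iff, GVT_adj_mid_iff, GVT_adj_leaf_iff, ite_eq_iff,
      exists_ne, eq_comm (a := (0 : Fin k))]
  rw [DI_eq_card_of_coloring hσ, hexposed, card_image_of_injective, card_univ, Fintype.card_fin]
  intro s t
  by_cases hs : s = 0 <;> by_cases ht : t = 0 <;> simp [hs, ht]

lemma isEquilibrium_treeColoring_one (hσ : ∀ v, (σ.symm v).1 = treeColoring 1 v) :
    isEquilibrium (GVT k x) Sigma.fst σ := by
  refine isEquilibrium_of_coloring hσ ?_
  rintro u v huv ⟨w, huw, hwv, hwc⟩ w' hvw'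
  cases u with
  | root =>
    obtain ⟨i, rfl⟩ := GVT_adj_root_iff.1 huw
    cases v <;> simp_all [GVT_adj_leaf_iff]
  | mid i =>
    rcases GVT_adj_mid_iff.1 huw with rfl | ⟨l, rfl⟩
    · cases v with
      | root => exact absurd rfl hwv
      | mid j =>
        obtain rfl : 0 = j := hwc
        rcases GVT_adj_mid_iff.1 hvw' with rfl | ⟨l, rfl⟩ <;> rfl
      | leaf j l => rw [GVT_adj_leaf_iff.1 hvw']; rfl
    · exact absurd hwc huv
  | leaf i l =>
    rw [GVT_adj_leaf_iff.1 huw] at hwc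
    exact absurd hwc huv

lemma exists_adj_treeColoring_ne (hx : 2 ≤ x) {π : Equiv.Perm (Fin k)} (hπ : ∀ t, π t ≠ t)
    (v : VT k x) : ∃ w, (GVT k x).Adj v w ∧ treeColoring π w ≠ treeColoring π v := by
  cases v with
  | root => exact ⟨.mid 0, GVT_adj_root_iff.2 ⟨0, rfl⟩, hπ 0⟩
  | mid i => exact ⟨.leaf i ⟨0, by omega⟩, GVT_adj_mid_iff.2 (.inr ⟨_, rfl⟩), (hπ i).symm⟩
  | leaf i l => exact ⟨.mid i, GVT_adj_leaf_iff.2 rfl, hπ i⟩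

lemma DI_treeColoring_of_forall_ne (hx : 2 ≤ x) {π : Equiv.Perm (Fin k)} (hπ : ∀ t, π t ≠ t)
    (hσ : ∀ v, (σ.symm v).1 = treeColoring π v) :
    DI (GVT k x) Sigma.fst σ = k * x + 1 := by
  rw [DI, filter_true_of_mem fun a _ =>
    (exposed_iff_of_coloring hσ).2 (exists_adj_treeColoring_ne hx hπ (σ a)), card_univ, card_AT]

end Tree

/-- in every `k`-swap game with only strategic agents, `k ≥ 2` nonempty
types and a connected topology, every assignment has degree of integration at least `k`;
consequently the integration price of anarchy is at most `n/k`. This bound is tight: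
in the `k`-swap game with `x+1` agents of type `0` and `x` agents of each other type on
the tree with root `α`, `k` children, and `x−1` leaves per child, some assignment
exposes all `n = kx+1` agents, while some equilibrium assignment has degree of
integration exactly `k`. -/
theorem integration_poa (k x : ℕ) (hk : 2 ≤ k) (hx : 2 ≤ x) :
    (∀ (A V : Type) [Fintype A] [DecidableEq A] [Fintype V] [DecidableEq V]
        (G : SimpleGraph V) [inst : DecidableRel G.Adj] (c : A → Fin k) (σ : A ≃ V),
        G.Connected → (∀ t : Fin k, ∃ i, c i = t) →
        k ≤ DI G c σ ∧
        (isEquilibrium G c σ →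
          ∀ σ' : A ≃ V, (DI G c σ' : ℚ) ≤ (Fintype.card A : ℚ) / (k : ℚ) * DI G c σ)) ∧
    (∃ σ : AT k x ≃ VT k x, DI (GVT k x) Sigma.fst σ = k * x + 1) ∧
    (∃ σ : AT k x ≃ VT k x, isEquilibrium (GVT k x) Sigma.fst σ ∧
        DI (GVT k x) Sigma.fst σ = k) := by
  have : NeZero k := ⟨by omega⟩
  have : Nontrivial (Fin k) := Fin.nontrivial_iff_two_le.2 hk
  refine ⟨fun A V _ _ _ _ G _ c σ hG hc => ⟨?_, fun _ σ' => ?_⟩, ?_, ?_⟩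
  · simpa using card_le_DI σ hG hc
  · simpa using DI_le_card_div_mul_DI σ hG hc σ'
  · obtain ⟨σ, hσ⟩ := exists_equiv_treeColoring (x := x) (by omega) (Equiv.addRight (1 : Fin k))
    exact ⟨σ, DI_treeColoring_of_forall_ne hx (fun t => by simp; omega) hσ⟩
  · obtain ⟨σ, hσ⟩ := exists_equiv_treeColoring (x := x) (by omega) (1 : Equiv.Perm (Fin k))
    exact ⟨σ, isEquilibrium_treeColoring_one hσ, DI_treeColoring_one hσ⟩

end SwapGame
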